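/- Let F be a properly parametrized Markov multi-map with associated SFT Σ_M. Suppose that for every a∈A₀ the graph G(a) of f_a is a straight line segment. If there exists a∈A₀ with R₀(a)∩P≠∅, and there exists an irreducible component of A containing A₀, then Σ_M satisfies the Coding Condition (CC). -/

import Mathlib

open Set Topology

/-! ### Generic dynamical notions -/

/-- Topological transitivity of a map. -/
def TopTransitive {α : Type*} [TopologicalSpace α] (T : α → α) : Prop :=
  ∀ U V : Set α, IsOpen U → IsOpen V → U.Nonempty → V.Nonempty →
    ∃ n : ℕ, (T^[n] '' U ∩ V).Nonempty

/-- Topological mixing of a map. -/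
def TopMixing {α : Type*} [TopologicalSpace α] (T : α → α) : Prop :=
  ∀ U V : Set α, IsOpen U → IsOpen V → U.Nonempty → V.Nonempty →
    ∃ N : ℕ, ∀ n, N ≤ n → (T^[n] '' U ∩ V).Nonempty

/-- Density of the set of periodic points of a map. -/
def DensePeriodic {α : Type*} [TopologicalSpace α] (T : α → α) : Prop :=
  Dense {x : α | ∃ p : ℕ, 1 ≤ p ∧ T^[p] x = x}

/-- The metric `d(x,y) = sup_k |x_k - y_k|/(k+1)` on sequence spaces. -/
noncomputable def dseq (x y : ℕ → ℝ) : ℝ := ⨆ k : ℕ, |x k - y k| / ((k : ℝ) + 1)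

/-- The specification property for a map `T` with respect to a distance function `d`. -/
def SpecProp {α : Type*} (T : α → α) (d : α → α → ℝ) : Prop :=
  ∀ ε : ℝ, 0 < ε → ∃ N : ℕ, ∀ l : ℕ, ∀ x : Fin (l + 1) → α, ∀ a b : Fin (l + 1) → ℕ,
    (∀ k, 1 ≤ a k) → (∀ k, a k ≤ b k) →
    (∀ k : Fin l, b k.castSucc < a k.succ ∧ b k.castSucc + N ≤ a k.succ) →
    ∀ p : ℕ, b (Fin.last l) + N ≤ p →
      ∃ z : α, T^[p] z = z ∧
        ∀ k : Fin (l + 1), ∀ i : ℕ, a k ≤ i → i ≤ b k → d (T^[i] z) (T^[i] (x k)) < ε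

/-- The length `ℓ` of a (possibly degenerate) interval. -/
noncomputable def intervalLen (I : Set ℝ) : ℝ := sSup I - sInf I

/-! ### Markov multi-maps -/

/-- A Markov multi-map of the interval, given by a tuple
`(P, A₀, A₁, A₂, D, R, {f_a})` as in the paper, together with the derived data
(inverse maps `g`, interiors `D0`, `R0`, graphs `Gr`, `G0`) which are uniquely
determined by the defining equations below. -/
structure MarkovMultiMap where
  A : Type
  finA : Finite A
  A0 : Set A
  A1 : Set A
  A2 : Set A
  P : Finset ℝ
  D : A → Set ℝ
  R : A → Set ℝ
  f : A → ℝ → ℝ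
  g : A → ℝ → ℝ
  D0 : A → Set ℝ
  R0 : A → Set ℝ
  Gr : A → Set (ℝ × ℝ)
  G0 : A → Set (ℝ × ℝ)
  P_zero : (0 : ℝ) ∈ P
  P_one : (1 : ℝ) ∈ P
  P_sub : (P : Set ℝ) ⊆ Set.Icc 0 1
  A_cover : ∀ a : A, a ∈ A0 ∨ a ∈ A1 ∨ a ∈ A2
  A01 : A0 ∩ A1 = ∅
  A02 : A0 ∩ A2 = ∅
  A12 : A1 ∩ A2 = ∅
  D_A0 : ∀ a ∈ A0, ∃ p ∈ P, ∃ q ∈ P, p < q ∧ (∀ r ∈ P, ¬(p < r ∧ r < q)) ∧ D a = Set.Icc p q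
  D_A12 : ∀ a ∈ A1 ∪ A2, ∃ p ∈ P, D a = {p}
  R_A0 : ∀ a ∈ A0, ∃ u ∈ P, ∃ v ∈ P, u < v ∧ R a = Set.Icc u v
  R_A1 : ∀ a ∈ A1, ∃ u ∈ P, ∃ v ∈ P, u < v ∧ R a = Set.Icc u v ∧
    Set.Icc u v ∩ (P : Set ℝ) = {u, v}
  R_A2 : ∀ a ∈ A2, ∃ u ∈ P, R a = {u}
  f_homeo : ∀ a ∈ A0, ContinuousOn (f a) (D a) ∧ Set.BijOn (f a) (D a) (R a)
  g_A0 : ∀ a ∈ A0, (∀ x ∈ D a, g a (f a x) = x) ∧ ∀ y ∈ R a, g a y ∈ D a ∧ f a (g a y) = y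
  g_A12 : ∀ a ∈ A1 ∪ A2, ∀ y ∈ R a, g a y ∈ D a
  cover : Set.Icc (0 : ℝ) 1 = ⋃ a : A, D a
  D0_A0 : ∀ a ∈ A0, D0 a = interior (D a)
  D0_A12 : ∀ a ∈ A1 ∪ A2, D0 a = D a
  R0_A01 : ∀ a ∈ A0 ∪ A1, R0 a = interior (R a)
  R0_A2 : ∀ a ∈ A2, R0 a = R a
  Gr_A0 : ∀ a ∈ A0, Gr a = {q : ℝ × ℝ | q.1 ∈ D a ∧ q.2 = f a q.1}
  Gr_A12 : ∀ a ∈ A1 ∪ A2, Gr a = (D a) ×ˢ (R a)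
  G0_A0 : ∀ a ∈ A0, G0 a = {q : ℝ × ℝ | q.1 ∈ D0 a ∧ q.2 = f a q.1}
  G0_A1 : ∀ a ∈ A1, G0 a = (D a) ×ˢ (R0 a)
  G0_A2 : ∀ a ∈ A2, G0 a = Gr a

namespace MarkovMultiMap

variable (M : MarkovMultiMap)

/-- The graph `G(F)` of the multi-map. -/
def GF : Set (ℝ × ℝ) := ⋃ a : M.A, M.Gr a

/-- `F` is properly parametrized: the sets `G₀(a)` partition `G(F)`. -/
def ProperlyParametrized : Prop :=
  (⋃ a : M.A, M.G0 a) = M.GF ∧ ∀ a b : M.A, a ≠ b → Disjoint (M.G0 a) (M.G0 b)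

/-- The forward trajectory space `X`. -/
def X : Set (ℕ → ℝ) :=
  {x | (∀ k, x k ∈ Set.Icc (0 : ℝ) 1) ∧ ∀ k, (x k, x (k + 1)) ∈ M.GF}

/-- The left-shift map `T` on the forward trajectory space. -/
def shift : M.X → M.X :=
  fun x => ⟨fun k => x.1 (k + 1), ⟨fun k => x.2.1 (k + 1), fun k => x.2.2 (k + 1)⟩⟩

/-- The inverse trajectory (inverse limit) space `Y`, encoded by `y k = y_{-k}`. -/
def Y : Set (ℕ → ℝ) :=
  {y | (∀ k, y k ∈ Set.Icc (0 : ℝ) 1) ∧ ∀ k, (y (k + 1), y k) ∈ M.GF}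

/-- The right-shift map `S` on the inverse limit space (in the encoding `y k = y_{-k}`). -/
def ishift : M.Y → M.Y :=
  fun y => ⟨fun k => y.1 (k + 1), ⟨fun k => y.2.1 (k + 1), fun k => y.2.2 (k + 1)⟩⟩

/-- The space `X_n` of finite trajectories of length `n`. -/
def finTraj (n : ℕ) : Set (Fin n → ℝ) :=
  {x | (∀ i, x i ∈ Set.Icc (0 : ℝ) 1) ∧
    ∀ i : Fin n, ∀ h : (i : ℕ) + 1 < n, (x i, x ⟨(i : ℕ) + 1, h⟩) ∈ M.GF}

/-- The associated nearest-neighbor SFT `Σ_M`. -/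
def SFT : Set (ℕ → M.A) := {a | ∀ n : ℕ, M.D0 (a (n + 1)) ⊆ M.R0 (a n)}

/-- The word `u` (of length `n`) occurs in some point of `Z`. -/
def WordIn {n : ℕ} (u : Fin n → M.A) (Z : Set (ℕ → M.A)) : Prop :=
  ∃ z ∈ Z, ∃ m : ℕ, ∀ i : Fin n, u i = z (m + (i : ℕ))

/-- `L_n`, the words of length `n` in the language of `Σ_M`. -/
def Lang (n : ℕ) : Set (Fin n → M.A) := {u | M.WordIn u M.SFT}

/-- `(x,u)` is a labeled finite trajectory: `(x_k, x_{k+1}) ∈ G(u_k)` for all `k`. -/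
def Labeled {n : ℕ} (x : Fin (n + 1) → ℝ) (u : Fin n → M.A) : Prop :=
  ∀ i : Fin n, (x i.castSucc, x i.succ) ∈ M.Gr (u i)

/-- `(x,u)` is a special labeled finite trajectory: `(x_k, x_{k+1}) ∈ G₀(u_k)` for all `k`. -/
def SpecialLabeled {n : ℕ} (x : Fin (n + 1) → ℝ) (u : Fin n → M.A) : Prop :=
  ∀ i : Fin n, (x i.castSucc, x i.succ) ∈ M.G0 (u i)

/-- A word `u ∈ L_n` is essential if the set of finite trajectories specially labeled
by `u` is open in `X_{n+1}`. -/
def EssentialWord {n : ℕ} (u : Fin n → M.A) : Prop :=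
  u ∈ M.Lang n ∧ IsOpen {x : M.finTraj (n + 1) | M.SpecialLabeled x.1 u}

/-- A symbol is essential if it appears in some essential word. -/
def EssentialSymbol (a : M.A) : Prop :=
  ∃ n : ℕ, ∃ u : Fin n → M.A, M.EssentialWord u ∧ ∃ i : Fin n, u i = a

/-- `A^(e)`, the set of essential symbols. -/
def Ess : Set M.A := {a | M.EssentialSymbol a}

/-- `E`, the set of essential symbolic sequences. -/
def E : Set (ℕ → M.A) := {z ∈ M.SFT | ∀ i : ℕ, z i ∈ M.Ess}

/-- A word all of whose letters lie in `C`, in the language of `Σ_M`. -/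
def WordOver {n : ℕ} (u : Fin n → M.A) (C : Set M.A) : Prop :=
  u ∈ M.Lang n ∧ ∀ i, u i ∈ C

/-- There is a word of length `n+1` over `C` beginning with `a` and ending with `b`. -/
def WordFromTo (C : Set M.A) (a b : M.A) (n : ℕ) : Prop :=
  ∃ u : Fin (n + 1) → M.A, M.WordOver u C ∧ u 0 = a ∧ u (Fin.last n) = b

/-- `C ⊆ A` is irreducible. -/
def IrreducibleSet (C : Set M.A) : Prop :=
  ∀ a ∈ C, ∀ b ∈ C, ∃ n : ℕ, M.WordFromTo C a b n

/-- `C` is an irreducible component (a maximal irreducible subset of `A`). -/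
def IrreducibleComponent (C : Set M.A) : Prop :=
  M.IrreducibleSet C ∧ ∀ C' : Set M.A, M.IrreducibleSet C' → C ⊆ C' → C' = C

/-- `C ⊆ A` is mixing. -/
def MixingSet (C : Set M.A) : Prop :=
  ∃ N : ℕ, 1 ≤ N ∧ ∀ a ∈ C, ∀ b ∈ C, ∀ n : ℕ, N ≤ n + 1 → M.WordFromTo C a b n

/-- `C` is a mixing component (a maximal mixing subset of `A`). -/
def MixingComponent (C : Set M.A) : Prop :=
  M.MixingSet C ∧ ∀ C' : Set M.A, M.MixingSet C' → C ⊆ C' → C' = C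

/-- The Irreducibility Condition (IC). -/
def IC : Prop := ∃ C : Set M.A, M.IrreducibleComponent C ∧ M.Ess ⊆ C

/-- The Mixing Condition (MC). -/
def MC : Prop := ∃ C : Set M.A, M.MixingComponent C ∧ M.Ess ⊆ C

/-- `Z` is a subshift of `Σ_M`: shift-invariant and closed in the product of discrete
topologies (closedness phrased combinatorially). -/
def IsSubshift (Z : Set (ℕ → M.A)) : Prop :=
  Z ⊆ M.SFT ∧ (∀ z ∈ Z, (fun k => z (k + 1)) ∈ Z) ∧
  ∀ x : ℕ → M.A, (∀ n : ℕ, ∃ z ∈ Z, ∀ i, i < n → z i = x i) → x ∈ Z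

/-- The symbol `a` occurs in some point of `Z`. -/
def SymbolInShift (Z : Set (ℕ → M.A)) (a : M.A) : Prop := ∃ z ∈ Z, ∃ k : ℕ, z k = a

/-- `Z` is transitive on symbols. -/
def TransitiveOnSymbols (Z : Set (ℕ → M.A)) : Prop :=
  ∀ a b : M.A, M.SymbolInShift Z a → M.SymbolInShift Z b →
    ∃ z ∈ Z, ∃ m n : ℕ, z m = a ∧ z (m + n) = b

end MarkovMultiMap

/-- The composition `g_{u₀} ∘ ⋯ ∘ g_{u_n}` of inverse maps along a list of symbols. -/
def gWordList (M : MarkovMultiMap) : List M.A → ℝ → ℝ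
  | [], x => x
  | a :: l, x => M.g a (gWordList M l x)

namespace MarkovMultiMap

/-- The inverse map `g_u` associated to a word `u = u₀⋯u_n`. -/
def gWord (M : MarkovMultiMap) {n : ℕ} (u : Fin (n + 1) → M.A) : ℝ → ℝ :=
  gWordList M (List.ofFn u)

/-- The interval `I_u = g_u(R(u_n))`. -/
def Iword (M : MarkovMultiMap) {n : ℕ} (u : Fin (n + 1) → M.A) : Set ℝ :=
  M.gWord u '' M.R (u (Fin.last n))

/-- The Coding Condition (CC). -/
def CC (M : MarkovMultiMap) : Prop :=
  ∃ Z : Set (ℕ → M.A), M.IsSubshift Z ∧ M.TransitiveOnSymbols Z ∧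
    (∀ y ∈ Set.Icc (0 : ℝ) 1, ∃ a ∈ Z, ∃ x ∈ M.X, x 0 = y ∧
      ∀ i : ℕ, (x i, x (i + 1)) ∈ M.Gr (a i)) ∧
    (∀ ε : ℝ, 0 < ε → ∃ N : ℕ, ∀ n : ℕ, N ≤ n → ∀ u : Fin (n + 1) → M.A,
      M.WordIn u Z → intervalLen (M.Iword u) < ε)

/-- Uniform equicontinuity of the family `{g_u : u ∈ L(C)}`. -/
def UnifEquicontOn (M : MarkovMultiMap) (C : Set M.A) : Prop :=
  ∀ ε : ℝ, 0 < ε → ∃ δ : ℝ, 0 < δ ∧ ∀ n : ℕ, ∀ u : Fin (n + 1) → M.A, M.WordOver u C →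
    ∀ x ∈ M.R (u (Fin.last n)), ∀ y ∈ M.R (u (Fin.last n)),
      |x - y| < δ → |M.gWord u x - M.gWord u y| < ε

end MarkovMultiMap

/-!
Let `δ > 0` be the smallest gap between points of `P`. Since the branches are affine, `g_a`
rescales lengths by `ℓ(D(a))/ℓ(R(a))`, so along an admissible word `ℓ(I_u)` is at most the
product of the ratios `ℓ(D(u_{i+1}))/ℓ(R(u_i))`. Each ratio is at most `1`, and at most `1 - δ`
when `R(u_i)` has a point of `P` in its interior (an expanding symbol); a symbol of `A₁ ∪ A₂`
collapses `I_u` to a point. Hence `ℓ(I_u)` decays geometrically on the subshift `Z` of sequences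
over the irreducible component in which nonexpanding `A₀`-symbols never occur many times in a row.

The range of a nonexpanding symbol `a` is a single interval of `P`, so each successor of `a` lies
in `A₀` and has domain `R(a)`. By irreducibility, every `A₀`-symbol thus reaches an expanding one
along a chain of bounded length; following such chains, and branching freely at expanding symbols,
codes every point of `[0, 1]` by a sequence of `Z`. Transitivity on symbols comes from connecting
words of bounded length inside the component.
-/

open Metric

theorem prod_range_le_pow_of_forall_exists_le {E : ℕ} {f : ℕ → ℝ} {θ : ℝ}
    (hf0 : ∀ i, 0 ≤ f i) (hf1 : ∀ i, f i ≤ 1) (hθ : ∀ i, ∃ j ≤ E, f (i + j) ≤ θ) :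
    ∀ {K n : ℕ}, K * (E + 1) ≤ n → ∏ i ∈ Finset.range n, f i ≤ θ ^ K
  | 0, n, _ => by simpa using Finset.prod_le_one (fun i _ => hf0 i) (fun i _ => hf1 i)
  | K + 1, n, hn => by
    obtain ⟨n, rfl⟩ : ∃ n', n = (E + 1) + n' := ⟨n - (E + 1), by rw [add_mul] at hn; omega⟩
    obtain ⟨j, hj, hjθ⟩ := hθ 0
    rw [zero_add] at hjθ
    have hblock : ∏ i ∈ Finset.range (E + 1), f i ≤ θ :=
      (Finset.prod_le_prod_of_subset_of_le_one (Finset.singleton_subset_iff.mpr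
        (Finset.mem_range.mpr (Nat.lt_succ_of_le hj))) (fun i _ => hf0 i)
        (fun i _ _ => hf1 i)).trans (by simpa using hjθ)
    have hrest := prod_range_le_pow_of_forall_exists_le (f := fun i => f (E + 1 + i))
      (fun i => hf0 _) (fun i => hf1 _) (fun i => by simpa [add_assoc] using hθ (E + 1 + i))
      (K := K) (n := n) (by rw [add_mul] at hn; omega)
    rw [Finset.prod_range_add, pow_succ']
    exact mul_le_mul hblock hrest (Finset.prod_nonneg fun i _ => hf0 _)
      ((hf0 j).trans hjθ)

theorem exists_forall_exists_le_of_finite {ι : Type*} [Finite ι] {P : ι → ℕ → Prop}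
    (h : ∀ i, ∃ n, P i n) : ∃ N, ∀ i, ∃ n ≤ N, P i n := by
  choose n hn using h
  obtain ⟨N, hN⟩ := Finite.exists_le n
  exact ⟨N, fun i => ⟨n i, hN i, hn i⟩⟩

theorem exists_le_of_forall_not_imp_lt {c : ℕ → ℕ} {p : ℕ → Prop}
    (h : ∀ k, ¬ p k → c (k + 1) < c k) (k : ℕ) : ∃ j ≤ c k, p (k + j) := by
  induction hck : c k using Nat.strong_induction_on generalizing k with
  | _ n ih =>
    by_cases hk : p k
    · exact ⟨0, Nat.zero_le _, hk⟩
    · obtain ⟨j, hj, hpj⟩ := ih _ (hck ▸ h k hk) (k + 1) rfl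
      exact ⟨j + 1, by have := h k hk; omega, by rwa [← add_assoc, add_right_comm]⟩

theorem exists_seq_of_forall_exists {σ : Type*} {S : Set σ} {r : σ → σ → Prop}
    (h : ∀ s ∈ S, ∃ t ∈ S, r s t) {s₀ : σ} (h₀ : s₀ ∈ S) :
    ∃ x : ℕ → σ, x 0 = s₀ ∧ ∀ k, x k ∈ S ∧ r (x k) (x (k + 1)) := by
  choose! F hFS hFr using h
  have hS : ∀ k, F^[k] s₀ ∈ S := fun k => by
    induction k with
    | zero => exact h₀
    | succ k ih => rw [Function.iterate_succ_apply']; exact hFS _ ih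
  exact ⟨fun k => F^[k] s₀, rfl, fun k =>
    ⟨hS k, by simpa only [Function.iterate_succ_apply'] using hFr _ (hS k)⟩⟩

def splice {α : Type*} (x y : ℕ → α) (n : ℕ) : ℕ → α := fun i => if i < n then x i else y (i - n)

section splice

variable {α : Type*} {x y : ℕ → α} {n : ℕ}

theorem splice_of_lt {i : ℕ} (h : i < n) : splice x y n i = x i := if_pos h

theorem splice_add (i : ℕ) : splice x y n (n + i) = y i := by simp [splice]

theorem splice_self : splice x y n n = y 0 := by simp [splice]

theorem splice_zero (hxy : x n = y 0) : splice x y n 0 = x 0 := by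
  rcases n.eq_zero_or_pos with rfl | hn
  · exact splice_self.trans hxy.symm
  · exact splice_of_lt hn

end splice

namespace MarkovMultiMap

variable (M : MarkovMultiMap)

lemma mem_Icc_of_mem_P {p : ℝ} (hp : p ∈ M.P) : p ∈ Icc (0 : ℝ) 1 := M.P_sub hp

lemma exists_D_eq_Icc {a : M.A} (ha : a ∈ M.A0) : ∃ p ∈ M.P, ∃ q ∈ M.P, p < q ∧
    (∀ r ∈ M.P, r ∉ Ioo p q) ∧ M.D a = Icc p q ∧ M.D0 a = Ioo p q := by
  obtain ⟨p, hp, q, hq, hpq, hgap, hD⟩ := M.D_A0 a ha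
  exact ⟨p, hp, q, hq, hpq, fun r hr hr' => hgap r hr hr', hD,
    by rw [M.D0_A0 a ha, hD, interior_Icc]⟩

lemma exists_D_eq_singleton {a : M.A} (ha : a ∈ M.A1 ∪ M.A2) :
    ∃ p ∈ M.P, M.D a = {p} ∧ M.D0 a = {p} := by
  obtain ⟨p, hp, hD⟩ := M.D_A12 a ha
  exact ⟨p, hp, hD, by rw [M.D0_A12 a ha, hD]⟩

lemma exists_R_eq_Icc {a : M.A} (ha : a ∈ M.A0 ∪ M.A1) :
    ∃ u ∈ M.P, ∃ v ∈ M.P, u < v ∧ M.R a = Icc u v ∧ M.R0 a = Ioo u v := by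
  have hR : ∃ u ∈ M.P, ∃ v ∈ M.P, u < v ∧ M.R a = Icc u v := by
    rcases ha with ha | ha
    · exact M.R_A0 a ha
    · obtain ⟨u, hu, v, hv, huv, hR, -⟩ := M.R_A1 a ha
      exact ⟨u, hu, v, hv, huv, hR⟩
  obtain ⟨u, hu, v, hv, huv, hR⟩ := hR
  exact ⟨u, hu, v, hv, huv, hR, by rw [M.R0_A01 a ha, hR, interior_Icc]⟩

lemma D_subset_Icc (a : M.A) : M.D a ⊆ Icc 0 1 := by
  rw [M.cover]
  exact subset_iUnion M.D a

lemma D_eq_closure_D0 (a : M.A) : M.D a = closure (M.D0 a) := by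
  rcases M.A_cover a with ha | ha
  · obtain ⟨p, -, q, -, hpq, -, hD, hD0⟩ := M.exists_D_eq_Icc ha
    rw [hD, hD0, closure_Ioo hpq.ne]
  · obtain ⟨p, -, hD, hD0⟩ := M.exists_D_eq_singleton ha
    rw [hD, hD0, closure_singleton]

lemma isClosed_R (a : M.A) : IsClosed (M.R a) := by
  rcases M.A_cover a with ha | ha | ha
  · obtain ⟨u, -, v, -, -, hR, -⟩ := M.exists_R_eq_Icc (Or.inl ha)
    exact hR ▸ isClosed_Icc
  · obtain ⟨u, -, v, -, -, hR, -⟩ := M.exists_R_eq_Icc (Or.inr ha)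
    exact hR ▸ isClosed_Icc
  · obtain ⟨u, -, hR⟩ := M.R_A2 a ha
    exact hR ▸ isClosed_singleton

lemma R0_subset_R (a : M.A) : M.R0 a ⊆ M.R a := by
  rcases M.A_cover a with ha | ha | ha
  · exact (M.R0_A01 a (Or.inl ha)).symm ▸ interior_subset
  · exact (M.R0_A01 a (Or.inr ha)).symm ▸ interior_subset
  · exact (M.R0_A2 a ha).le

lemma D_subset_R_of_D0_subset_R0 {a b : M.A} (h : M.D0 b ⊆ M.R0 a) : M.D b ⊆ M.R a := by
  rw [M.D_eq_closure_D0 b]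
  exact closure_minimal (h.trans (M.R0_subset_R a)) (M.isClosed_R a)

lemma g_mapsTo (a : M.A) : MapsTo (M.g a) (M.R a) (M.D a) := by
  rcases M.A_cover a with ha | ha
  · exact fun y hy => ((M.g_A0 a ha).2 y hy).1
  · exact M.g_A12 a ha

lemma f_mapsTo {a : M.A} (ha : a ∈ M.A0) : MapsTo (M.f a) (M.D a) (M.R a) :=
  (M.f_homeo a ha).2.mapsTo

lemma exists_mem_D_of_mem_Icc {u v y : ℝ} (hu : u ∈ M.P) (hv : v ∈ M.P) (huv : u < v)
    (hy : y ∈ Icc u v) : ∃ b ∈ M.A0, y ∈ M.D b ∧ M.D0 b ⊆ Ioo u v := by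
  -- `[u, v]` is the closure of `(u, v) \ P`, and the closed set `T` covers `(u, v) \ P`.
  have := M.finA
  set T := ⋃ b ∈ {b | b ∈ M.A0 ∧ M.D0 b ⊆ Ioo u v}, M.D b
  have hT : IsClosed T :=
    (Set.toFinite _).isClosed_biUnion fun b _ => (M.D_eq_closure_D0 b) ▸ isClosed_closure
  have hsub : Ioo u v ∩ (↑M.P)ᶜ ⊆ T := by
    rintro z ⟨hz, hzP⟩
    have hz01 : z ∈ Icc (0 : ℝ) 1 :=
      ⟨(M.mem_Icc_of_mem_P hu).1.trans hz.1.le, hz.2.le.trans (M.mem_Icc_of_mem_P hv).2⟩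
    rw [M.cover] at hz01
    obtain ⟨b, hzb⟩ := mem_iUnion.mp hz01
    rcases M.A_cover b with hb | hb
    · obtain ⟨p, hp, q, hq, -, hgap, hD, hD0⟩ := M.exists_D_eq_Icc hb
      rw [hD] at hzb
      have hpz : p < z := lt_of_le_of_ne hzb.1 fun h => hzP (h ▸ hp)
      have hzq : z < q := lt_of_le_of_ne hzb.2 fun h => hzP (h ▸ hq)
      have hup : u ≤ p := not_lt.mp fun h => hgap u hu ⟨h, hz.1.trans hzq⟩
      have hqv : q ≤ v := not_lt.mp fun h => hgap v hv ⟨hpz.trans hz.2, h⟩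
      exact mem_biUnion ⟨hb, hD0 ▸ Ioo_subset_Ioo hup hqv⟩ (hD ▸ hzb)
    · obtain ⟨p, hp, hD, -⟩ := M.exists_D_eq_singleton hb
      rw [hD, mem_singleton_iff] at hzb
      exact absurd (hzb ▸ hp) hzP
  have hdense : Dense (↑M.P : Set ℝ)ᶜ := M.P.finite_toSet.countable.dense_compl ℝ
  have hy' : y ∈ T := by
    rw [← closure_Ioo huv.ne] at hy
    exact ((closure_minimal (hdense.open_subset_closure_inter isOpen_Ioo) isClosed_closure).trans
      (closure_minimal hsub hT)) hy
  obtain ⟨b, ⟨hb, hbD0⟩, hyb⟩ := mem_iUnion₂.mp hy'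
  exact ⟨b, hb, hyb, hbD0⟩

def IsNonexpanding (a : M.A) : Prop := a ∈ M.A0 ∧ ¬ (M.R0 a ∩ ↑M.P).Nonempty

lemma exists_pos_le_sub : ∃ δ > 0, ∀ p ∈ M.P, ∀ q ∈ M.P, p < q → δ ≤ q - p := by
  classical
  set S := (M.P ×ˢ M.P).filter fun pq => pq.1 < pq.2
  have hS : S.Nonempty := ⟨(0, 1), by simp [S, M.P_zero, M.P_one]⟩
  obtain ⟨pq, hpq, hmin⟩ := S.exists_min_image (fun pq => pq.2 - pq.1) hS
  refine ⟨pq.2 - pq.1, sub_pos.mpr (Finset.mem_filter.mp hpq).2, fun p hp q hq h => ?_⟩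
  exact hmin (p, q) (by simp [S, hp, hq, h])

lemma exists_diam_D_le_mul_diam_R : ∃ θ : ℝ, 0 ≤ θ ∧ θ < 1 ∧ ∀ a b, a ∈ M.A0 →
    ¬ M.IsNonexpanding a → M.D0 b ⊆ M.R0 a → diam (M.D b) ≤ θ * diam (M.R a) := by
  obtain ⟨δ, hδ, hgap⟩ := M.exists_pos_le_sub
  have hδ1 : δ ≤ 1 := by simpa using hgap 0 M.P_zero 1 M.P_one one_pos
  refine ⟨1 - δ, by linarith, by linarith, fun a b ha hexp hab => ?_⟩
  obtain ⟨r, hrR0, hrP⟩ := not_not.mp fun h => hexp ⟨ha, h⟩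
  obtain ⟨u, hu, v, hv, huv, hR, hR0⟩ := M.exists_R_eq_Icc (Or.inl ha)
  rw [hR0] at hab hrR0
  rw [hR, Real.diam_Icc huv.le]
  have hvu : v - u ≤ 1 := by linarith [(M.mem_Icc_of_mem_P hu).1, (M.mem_Icc_of_mem_P hv).2]
  rcases M.A_cover b with hb | hb
  · obtain ⟨p, -, q, -, hpq, hfree, hD, hD0⟩ := M.exists_D_eq_Icc hb
    rw [hD0, Ioo_subset_Ioo_iff hpq] at hab
    rw [hD, Real.diam_Icc hpq.le]
    -- `r` splits `(u, v)` and cannot lie inside `(p, q)`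
    rcases le_or_gt r p with hrp | hpr
    · nlinarith [hgap u hu r hrP hrR0.1]
    · have hqr : q ≤ r := not_lt.mp fun h => hfree r hrP ⟨hpr, h⟩
      nlinarith [hgap r hrP v hv hrR0.2]
  · obtain ⟨p, -, hD, -⟩ := M.exists_D_eq_singleton hb
    rw [hD, diam_singleton]
    nlinarith

variable {M} in
lemma IsNonexpanding.mem_A0_and_D_eq_R {a c : M.A} (ha : M.IsNonexpanding a)
    (hac : M.D0 c ⊆ M.R0 a) : c ∈ M.A0 ∧ M.D c = M.R a := by
  obtain ⟨ha0, hfree⟩ := ha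
  obtain ⟨u, -, v, -, -, hR, hR0⟩ := M.exists_R_eq_Icc (Or.inl ha0)
  have hfree' : ∀ r ∈ M.P, r ∉ Ioo u v := fun r hr hr' => hfree ⟨r, hR0 ▸ hr', hr⟩
  rw [hR0] at hac
  rcases M.A_cover c with hc | hc
  · obtain ⟨p, hp, q, hq, hpq, -, hD, hD0⟩ := M.exists_D_eq_Icc hc
    rw [hD0, Ioo_subset_Ioo_iff hpq] at hac
    have hup : u = p := hac.1.eq_of_not_lt fun h => hfree' p hp ⟨h, hpq.trans_le hac.2⟩
    have hqv : q = v := hac.2.eq_of_not_lt fun h => hfree' q hq ⟨hac.1.trans_lt hpq, h⟩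
    exact ⟨hc, by rw [hD, hR, hup, hqv]⟩
  · obtain ⟨p, hp, -, hD0⟩ := M.exists_D_eq_singleton hc
    exact absurd (hac (hD0 ▸ rfl)) (hfree' p hp)

lemma diam_image_g_le {a : M.A} (ha : a ∈ M.A0) {c d : ℝ}
    (hf : ∀ x ∈ M.D a, M.f a x = c * x + d) {S : Set ℝ} (hS : S ⊆ M.R a) :
    diam (M.g a '' S) ≤ diam (M.D a) / diam (M.R a) * diam S := by
  obtain ⟨p, -, q, -, hpq, -, hD, -⟩ := M.exists_D_eq_Icc ha
  obtain ⟨u, -, v, -, huv, hR, -⟩ := M.exists_R_eq_Icc (Or.inl ha)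
  rw [hD, hR, Real.diam_Icc hpq.le, Real.diam_Icc huv.le]
  have hinv : ∀ y ∈ M.R a, ∀ z ∈ M.R a, y - z = c * (M.g a y - M.g a z) := by
    intro y hy z hz
    have hfg : ∀ w ∈ M.R a, w = c * M.g a w + d := fun w hw => by
      rw [← hf _ ((M.g_A0 a ha).2 w hw).1, ((M.g_A0 a ha).2 w hw).2]
    linear_combination hfg y hy - hfg z hz
  have hgD : ∀ y ∈ M.R a, M.g a y ∈ Icc p q := fun y hy => hD ▸ M.g_mapsTo a hy
  have hu : u ∈ M.R a := hR ▸ left_mem_Icc.mpr huv.le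
  have hv : v ∈ M.R a := hR ▸ right_mem_Icc.mpr huv.le
  have hslope : v - u ≤ |c| * (q - p) := by
    have h := abs_sub_le_of_le_of_le (hgD v hv).1 (hgD v hv).2 (hgD u hu).1 (hgD u hu).2
    calc v - u = |c * (M.g a v - M.g a u)| := by
            rw [← hinv v hv u hu, abs_of_pos (by linarith)]
      _ ≤ |c| * (q - p) := by rw [abs_mul]; gcongr
  have hc : 0 < |c| := by
    by_contra h
    nlinarith [abs_nonneg c]
  have hSb : Bornology.IsBounded S := (isBounded_Icc u v).subset (hR ▸ hS)
  apply diam_le_of_forall_dist_le (by positivity)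
  rintro _ ⟨y, hy, rfl⟩ _ ⟨z, hz, rfl⟩
  have hyz : |y - z| = |c| * |M.g a y - M.g a z| := by
    rw [hinv y (hS hy) z (hS hz), abs_mul]
  calc dist (M.g a y) (M.g a z) = |M.g a y - M.g a z| := Real.dist_eq _ _
    _ ≤ (q - p) / (v - u) * |y - z| := by
        rw [hyz, div_mul_eq_mul_div, le_div_iff₀ (by linarith)]
        nlinarith [abs_nonneg (M.g a y - M.g a z)]
    _ ≤ (q - p) / (v - u) * diam S := by
        have hq : 0 ≤ (q - p) / (v - u) := div_nonneg (by linarith) (by linarith)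
        exact mul_le_mul_of_nonneg_left (Real.dist_eq y z ▸ dist_le_diam_of_mem hSb hy hz) hq

def IsAdmissible {n : ℕ} (u : Fin (n + 1) → M.A) : Prop :=
  ∀ i : Fin n, M.D0 (u i.succ) ⊆ M.R0 (u i.castSucc)

variable {M}

lemma IsAdmissible.tail {n : ℕ} {u : Fin (n + 2) → M.A} (hu : M.IsAdmissible u) :
    M.IsAdmissible (Fin.tail u) :=
  fun i => hu i.succ

lemma WordIn.isAdmissible {Z : Set (ℕ → M.A)} (hZ : Z ⊆ M.SFT) {n : ℕ}
    {u : Fin (n + 1) → M.A} (hu : M.WordIn u Z) : M.IsAdmissible u := by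
  obtain ⟨z, hz, m, hzu⟩ := hu
  intro i
  rw [hzu, hzu]
  exact hZ hz (m + i)

variable (M)

lemma isBounded_D (a : M.A) : Bornology.IsBounded (M.D a) :=
  (isBounded_Icc 0 1).subset (M.D_subset_Icc a)

lemma Iword_succ {n : ℕ} (u : Fin (n + 2) → M.A) :
    M.Iword u = M.g (u 0) '' M.Iword (Fin.tail u) := by
  simp only [Iword, gWord, List.ofFn_succ, gWordList, image_image, Fin.tail, Fin.succ_last]

lemma Iword_subset_D : ∀ {n : ℕ} {u : Fin (n + 1) → M.A}, M.IsAdmissible u →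
    M.Iword u ⊆ M.D (u 0)
  | 0, u, _ => (M.g_mapsTo (u 0)).image_subset
  | _ + 1, u, hu => by
    rw [M.Iword_succ]
    exact (image_mono <| (Iword_subset_D hu.tail).trans
      (M.D_subset_R_of_D0_subset_R0 (hu 0))).trans (M.g_mapsTo (u 0)).image_subset

open Classical in
noncomputable def contractionFactor (θ : ℝ) (a : M.A) : ℝ :=
  if M.IsNonexpanding a then 1 else θ

lemma contractionFactor_nonneg {θ : ℝ} (hθ : 0 ≤ θ) (a : M.A) : 0 ≤ M.contractionFactor θ a := by
  unfold contractionFactor; split_ifs <;> positivity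

lemma contractionFactor_le_one {θ : ℝ} (hθ : θ ≤ 1) (a : M.A) : M.contractionFactor θ a ≤ 1 := by
  unfold contractionFactor; split_ifs <;> linarith

lemma diam_D_le_contractionFactor_mul {θ : ℝ} (hθ : ∀ a b, a ∈ M.A0 → ¬ M.IsNonexpanding a →
      M.D0 b ⊆ M.R0 a → diam (M.D b) ≤ θ * diam (M.R a))
    {a b : M.A} (ha : a ∈ M.A0) (hab : M.D0 b ⊆ M.R0 a) :
    diam (M.D b) ≤ M.contractionFactor θ a * diam (M.R a) := by
  unfold contractionFactor
  split_ifs with hexp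
  · obtain ⟨u, -, v, -, -, hR, -⟩ := M.exists_R_eq_Icc (Or.inl ha)
    rw [one_mul]
    exact diam_mono (M.D_subset_R_of_D0_subset_R0 hab) (hR ▸ isBounded_Icc u v)
  · exact hθ a b ha hexp hab

lemma diam_Iword_le (hlin : ∀ a ∈ M.A0, ∃ c d : ℝ, ∀ x ∈ M.D a, M.f a x = c * x + d)
    {θ : ℝ} (hθ0 : 0 ≤ θ) (hθ : ∀ a b, a ∈ M.A0 → ¬ M.IsNonexpanding a →
      M.D0 b ⊆ M.R0 a → diam (M.D b) ≤ θ * diam (M.R a)) :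
    ∀ {n : ℕ} {u : Fin (n + 1) → M.A}, M.IsAdmissible u →
      diam (M.Iword u) ≤ diam (M.D (u 0)) * ∏ i : Fin n, M.contractionFactor θ (u i.castSucc)
  | 0, u, hu => by
    simpa using diam_mono (M.Iword_subset_D hu) (M.isBounded_D (u 0))
  | n + 1, u, hu => by
    have hS : M.Iword (Fin.tail u) ⊆ M.R (u 0) :=
      (M.Iword_subset_D hu.tail).trans (M.D_subset_R_of_D0_subset_R0 (hu 0))
    have hcf := M.contractionFactor_nonneg hθ0
    have hprod : 0 ≤ ∏ i : Fin n, M.contractionFactor θ (Fin.tail u i.castSucc) :=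
      Finset.prod_nonneg fun i _ => hcf _
    rw [M.Iword_succ, Fin.prod_univ_succ]
    rcases M.A_cover (u 0) with hu0 | hu0
    · obtain ⟨c, d, hf⟩ := hlin _ hu0
      obtain ⟨v, -, w, -, hvw, hR, -⟩ := M.exists_R_eq_Icc (Or.inl hu0)
      have hR0 : 0 < diam (M.R (u 0)) := by rw [hR, Real.diam_Icc hvw.le]; linarith
      calc diam (M.g (u 0) '' M.Iword (Fin.tail u))
          ≤ diam (M.D (u 0)) / diam (M.R (u 0)) * diam (M.Iword (Fin.tail u)) :=
            M.diam_image_g_le hu0 hf hS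
        _ ≤ diam (M.D (u 0)) / diam (M.R (u 0)) * (M.contractionFactor θ (u 0) *
              diam (M.R (u 0)) * ∏ i : Fin n, M.contractionFactor θ (Fin.tail u i.castSucc)) := by
            gcongr
            exact (diam_Iword_le hlin hθ0 hθ hu.tail).trans <| mul_le_mul_of_nonneg_right
              (M.diam_D_le_contractionFactor_mul hθ hu0 (hu 0)) hprod
        _ = _ := by
            field_simp
            rfl
    · obtain ⟨p, -, hD, -⟩ := M.exists_D_eq_singleton hu0
      rw [diam_subsingleton (subsingleton_singleton.anti
        (hD ▸ (M.g_mapsTo (u 0)).mono_left hS |>.image_subset))]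
      exact mul_nonneg diam_nonneg (mul_nonneg (hcf _) hprod)

/-- For suitable `C` and `E`, this is the subshift `Z` of the Coding Condition. -/
def shortRunShift (C : Set M.A) (E : ℕ) : Set (ℕ → M.A) :=
  {z | z ∈ M.SFT ∧ (∀ i, z i ∈ C) ∧ ∀ i, ∃ j ≤ E, ¬ M.IsNonexpanding (z (i + j))}

lemma shortRunShift_mono {C C' : Set M.A} (hC : C ⊆ C') {E E' : ℕ} (hE : E ≤ E') :
    M.shortRunShift C E ⊆ M.shortRunShift C' E' :=
  fun _ ⟨hz, hzC, hzE⟩ => ⟨hz, fun i => hC (hzC i),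
    fun i => (hzE i).imp fun _ ⟨hj, hjexp⟩ => ⟨hj.trans hE, hjexp⟩⟩

lemma isSubshift_shortRunShift (C : Set M.A) (E : ℕ) : M.IsSubshift (M.shortRunShift C E) := by
  refine ⟨fun z hz => hz.1, fun z ⟨hz, hzC, hzE⟩ => ⟨fun i => hz (i + 1), fun i => hzC (i + 1),
    fun i => ?_⟩, fun z hz => ⟨fun i => ?_, fun i => ?_, fun i => ?_⟩⟩
  · obtain ⟨j, hj, hjexp⟩ := hzE (i + 1)
    exact ⟨j, hj, by rwa [add_right_comm] at hjexp⟩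
  · obtain ⟨w, hw, hwz⟩ := hz (i + 2)
    rw [← hwz i (by omega), ← hwz (i + 1) (by omega)]
    exact hw.1 i
  · obtain ⟨w, hw, hwz⟩ := hz (i + 1)
    exact hwz i (by omega) ▸ hw.2.1 i
  · obtain ⟨w, hw, hwz⟩ := hz (i + E + 1)
    obtain ⟨j, hj, hjexp⟩ := hw.2.2 i
    exact ⟨j, hj, hwz (i + j) (by omega) ▸ hjexp⟩

lemma intervalLen_Iword_lt (hlin : ∀ a ∈ M.A0, ∃ c d : ℝ, ∀ x ∈ M.D a, M.f a x = c * x + d)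
    {θ : ℝ} (hθ0 : 0 ≤ θ) (hθ1 : θ < 1) (hθ : ∀ a b, a ∈ M.A0 → ¬ M.IsNonexpanding a →
      M.D0 b ⊆ M.R0 a → diam (M.D b) ≤ θ * diam (M.R a)) (C : Set M.A) (E : ℕ)
    {ε : ℝ} (hε : 0 < ε) : ∃ N : ℕ, ∀ n : ℕ, N ≤ n → ∀ u : Fin (n + 1) → M.A,
      M.WordIn u (M.shortRunShift C E) → intervalLen (M.Iword u) < ε := by
  obtain ⟨K, hK⟩ := exists_pow_lt_of_lt_one hε hθ1
  refine ⟨K * (E + 1), fun n hn u hu => ?_⟩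
  have hadm := hu.isAdmissible fun z hz => hz.1
  obtain ⟨z, ⟨-, -, hzθ⟩, m, hzu⟩ := hu
  have hcf0 := M.contractionFactor_nonneg hθ0
  have hcf1 := M.contractionFactor_le_one hθ1.le
  have hprod : ∏ i : Fin n, M.contractionFactor θ (u i.castSucc) ≤ θ ^ K := by
    simp only [hzu, Fin.val_castSucc]
    rw [Fin.prod_univ_eq_prod_range (fun i => M.contractionFactor θ (z (m + i)))]
    refine prod_range_le_pow_of_forall_exists_le (fun i => hcf0 _) (fun i => hcf1 _)
      (fun i => ?_) hn
    obtain ⟨j, hj, hjexp⟩ := hzθ (m + i)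
    exact ⟨j, hj, by simp [contractionFactor, ← add_assoc, hjexp]⟩
  have hD : diam (M.D (u 0)) ≤ 1 := by
    simpa [Real.diam_Icc zero_le_one] using
      diam_mono (M.D_subset_Icc (u 0)) (isBounded_Icc (0 : ℝ) 1)
  rw [intervalLen, ← Real.diam_eq ((M.isBounded_D (u 0)).subset (M.Iword_subset_D hadm))]
  calc diam (M.Iword u)
      ≤ diam (M.D (u 0)) * ∏ i : Fin n, M.contractionFactor θ (u i.castSucc) :=
        M.diam_Iword_le hlin hθ0 hθ hadm
    _ ≤ 1 * θ ^ K := mul_le_mul hD hprod (Finset.prod_nonneg fun i _ => hcf0 _) zero_le_one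
    _ < ε := by rwa [one_mul]

def ReachesExpandingWithin : ℕ → M.A → Prop
  | 0, a => ¬ M.IsNonexpanding a
  | n + 1, a => ¬ M.IsNonexpanding a ∨
      ∃ c ∈ M.A0, M.D0 c ⊆ M.R0 a ∧ ReachesExpandingWithin n c

lemma exists_reachesExpandingWithin_of_isAdmissible : ∀ {n : ℕ} {u : Fin (n + 1) → M.A},
    M.IsAdmissible u → ¬ M.IsNonexpanding (u (Fin.last n)) →
    ∃ k, M.ReachesExpandingWithin k (u 0)
  | 0, _, _, hlast => ⟨0, hlast⟩
  | n + 1, u, hu, hlast => by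
    by_cases hu0 : M.IsNonexpanding (u 0)
    · obtain ⟨k, hk⟩ := exists_reachesExpandingWithin_of_isAdmissible (u := Fin.tail u) hu.tail
        (by rwa [Fin.tail, Fin.succ_last])
      exact ⟨k + 1, Or.inr ⟨u 1, (hu0.mem_A0_and_D_eq_R (hu 0)).1, hu 0, hk⟩⟩
    · exact ⟨0, hu0⟩

lemma exists_uniform_reachesExpandingWithin
    (hexist : ∃ a ∈ M.A0, (M.R0 a ∩ (M.P : Set ℝ)).Nonempty) {C : Set M.A}
    (hC : M.IrreducibleSet C) (hA0C : M.A0 ⊆ C) :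
    ∃ E, ∀ b ∈ M.A0, ∃ n ≤ E, M.ReachesExpandingWithin n b := by
  have := M.finA
  obtain ⟨a, ha, hexp⟩ := hexist
  obtain ⟨E, hE⟩ := exists_forall_exists_le_of_finite
    (P := fun b n => b ∈ M.A0 → M.ReachesExpandingWithin n b) fun b => by
      by_cases hb : b ∈ M.A0
      · obtain ⟨n, u, ⟨hu, -⟩, hu0, hulast⟩ := hC b (hA0C hb) a (hA0C ha)
        obtain ⟨k, hk⟩ := M.exists_reachesExpandingWithin_of_isAdmissible
          (hu.isAdmissible subset_rfl) (hulast ▸ fun h => h.2 hexp)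
        exact ⟨k, fun _ => hu0 ▸ hk⟩
      · exact ⟨0, fun h => absurd h hb⟩
  exact ⟨E, fun b hb => (hE b).imp fun n hn => ⟨hn.1, hn.2 hb⟩⟩

lemma exists_next_symbol {E : ℕ} (hE : ∀ b ∈ M.A0, ∃ n ≤ E, M.ReachesExpandingWithin n b)
    {a : M.A} (ha : a ∈ M.A0) {n : ℕ} (hnE : n ≤ E) (hn : M.ReachesExpandingWithin n a)
    {y : ℝ} (hy : y ∈ M.D a) : ∃ b ∈ M.A0, ∃ n' ≤ E, M.ReachesExpandingWithin n' b ∧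
      M.f a y ∈ M.D b ∧ M.D0 b ⊆ M.R0 a ∧ (M.IsNonexpanding a → n' < n) := by
  by_cases hexp : M.IsNonexpanding a
  · obtain _ | m := n
    · exact absurd hexp hn
    obtain ⟨c, hc, hac, hm⟩ := hn.resolve_left (not_not.mpr hexp)
    have hDc := (hexp.mem_A0_and_D_eq_R hac).2
    exact ⟨c, hc, m, by omega, hm, hDc ▸ M.f_mapsTo ha hy, hac, fun _ => Nat.lt_succ_self m⟩
  · obtain ⟨u, hu, v, hv, huv, hR, hR0⟩ := M.exists_R_eq_Icc (Or.inl ha)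
    obtain ⟨b, hb, hfb, hbR⟩ := M.exists_mem_D_of_mem_Icc hu hv huv (hR ▸ M.f_mapsTo ha hy)
    obtain ⟨n', hn'E, hn'⟩ := hE b hb
    exact ⟨b, hb, n', hn'E, hn', hfb, hR0 ▸ hbR, fun h => absurd h hexp⟩

lemma exists_orbit_mem_shortRunShift {E : ℕ}
    (hE : ∀ b ∈ M.A0, ∃ n ≤ E, M.ReachesExpandingWithin n b) {b : M.A} (hb : b ∈ M.A0)
    {y : ℝ} (hy : y ∈ M.D b) : ∃ s ∈ M.shortRunShift M.A0 E, ∃ x ∈ M.X, s 0 = b ∧ x 0 = y ∧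
      ∀ k, (x k, x (k + 1)) ∈ M.Gr (s k) := by
  obtain ⟨n, hnE, hn⟩ := hE b hb
  -- States `(a, y, n)`: the counter `n` drops at every nonexpanding step.
  obtain ⟨σ, hσ0, hσ⟩ := exists_seq_of_forall_exists
    (S := {t : M.A × ℝ × ℕ | t.1 ∈ M.A0 ∧ t.2.1 ∈ M.D t.1 ∧ t.2.2 ≤ E ∧
      M.ReachesExpandingWithin t.2.2 t.1})
    (r := fun t t' => t'.2.1 = M.f t.1 t.2.1 ∧ M.D0 t'.1 ⊆ M.R0 t.1 ∧
      (M.IsNonexpanding t.1 → t'.2.2 < t.2.2))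
    (fun t ⟨ht, hty, htE, htn⟩ => by
      obtain ⟨c, hc, n', hn'E, hn', hfc, hac, hlt⟩ := M.exists_next_symbol hE ht htE htn hty
      exact ⟨(c, M.f t.1 t.2.1, n'), ⟨hc, hfc, hn'E, hn'⟩, rfl, hac, hlt⟩)
    (s₀ := (b, y, n)) ⟨hb, hy, hnE, hn⟩
  have hGr : ∀ k, ((σ k).2.1, (σ (k + 1)).2.1) ∈ M.Gr (σ k).1 := fun k => by
    rw [M.Gr_A0 _ (hσ k).1.1]
    exact ⟨(hσ k).1.2.1, (hσ k).2.1⟩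
  refine ⟨fun k => (σ k).1, ⟨fun k => (hσ k).2.2.1, fun k => (hσ k).1.1, fun k => ?_⟩,
    fun k => (σ k).2.1, ⟨fun k => M.D_subset_Icc _ (hσ k).1.2.1,
      fun k => mem_iUnion.mpr ⟨_, hGr k⟩⟩, by simp [hσ0], by simp [hσ0], hGr⟩
  obtain ⟨j, hj, hjexp⟩ := exists_le_of_forall_not_imp_lt (c := fun k => (σ k).2.2)
    (p := fun k => ¬ M.IsNonexpanding (σ k).1) (fun k hk => (hσ k).2.2.2 (not_not.mp hk)) k
  exact ⟨j, hj.trans (hσ k).1.2.2.1, hjexp⟩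

lemma splice_mem_SFT {x y : ℕ → M.A} {n : ℕ} (hx : x ∈ M.SFT) (hy : y ∈ M.SFT)
    (hxy : x n = y 0) : splice x y n ∈ M.SFT := by
  intro i
  rcases lt_trichotomy (i + 1) n with hi | rfl | hi
  · rw [splice_of_lt hi, splice_of_lt (by omega)]
    exact hx i
  · rw [splice_of_lt i.lt_succ_self, splice_self, ← hxy]
    exact hx i
  · obtain ⟨l, rfl⟩ : ∃ l, i = n + l := ⟨i - n, by omega⟩
    rw [add_assoc, splice_add, splice_add]
    exact hy l

lemma splice_mem_shortRunShift {C : Set M.A} {E E' : ℕ} (hE : E ≤ E') {x y : ℕ → M.A} {n : ℕ}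
    (hx : x ∈ M.SFT) (hxC : ∀ i < n, x i ∈ C) (hy : y ∈ M.shortRunShift C E)
    (hxy : x n = y 0) (hxE : ∀ i < n, ∃ j ≤ E', ¬ M.IsNonexpanding (splice x y n (i + j))) :
    splice x y n ∈ M.shortRunShift C E' := by
  refine ⟨M.splice_mem_SFT hx hy.1 hxy, fun i => ?_, fun i => ?_⟩ <;>
    rcases lt_or_ge i n with hi | hi
  · exact splice_of_lt hi ▸ hxC i hi
  · obtain ⟨l, rfl⟩ := Nat.exists_eq_add_of_le hi
    exact (splice_add l).symm ▸ hy.2.1 l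
  · exact hxE i hi
  · obtain ⟨l, rfl⟩ := Nat.exists_eq_add_of_le hi
    obtain ⟨j, hj, hjexp⟩ := hy.2.2 l
    exact ⟨j, hj.trans hE, by rwa [add_assoc, splice_add]⟩

lemma exists_mem_shortRunShift_zero_eq {C : Set M.A} {E : ℕ}
    (hstart : ∀ b ∈ M.A0, ∃ s ∈ M.shortRunShift C E, s 0 = b) {z : ℕ → M.A} (hz : z ∈ M.SFT)
    (hzC : ∀ i, z i ∈ C) (k : ℕ) : ∃ t ∈ M.shortRunShift C E, t 0 = z k := by
  classical
  -- Follow `z` from `k` up to its first `A₀`-symbol, then restart with `hstart`.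
  have hx : (fun i => z (k + i)) ∈ M.SFT := fun i => hz (k + i)
  by_cases h : ∃ i, z (k + i) ∈ M.A0
  · obtain ⟨s, hs, hs0⟩ := hstart _ (Nat.find_spec h)
    refine ⟨splice (fun i => z (k + i)) s (Nat.find h), M.splice_mem_shortRunShift le_rfl hx
      (fun i _ => hzC _) hs hs0.symm fun i hi => ⟨0, Nat.zero_le E, ?_⟩, splice_zero hs0.symm⟩
    rw [add_zero, splice_of_lt hi]
    exact fun hexp => Nat.find_min h hi hexp.1
  · push Not at h
    exact ⟨fun i => z (k + i), ⟨hx, fun i => hzC _, fun i => ⟨0, Nat.zero_le E,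
      fun hexp => h _ hexp.1⟩⟩, rfl⟩

lemma transitiveOnSymbols_shortRunShift {C : Set M.A} {E W : ℕ}
    (hW : ∀ a ∈ C, ∀ b ∈ C, ∃ n ≤ W, M.WordFromTo C a b n)
    (hstart : ∀ b ∈ M.A0, ∃ s ∈ M.shortRunShift C E, s 0 = b) :
    M.TransitiveOnSymbols (M.shortRunShift C (W + E)) := by
  -- A connecting word from `za ka` to `zb kb`, followed by a sequence of short runs from `zb kb`.
  rintro - - ⟨za, hza, ka, rfl⟩ ⟨zb, hzb, kb, rfl⟩
  obtain ⟨n, hnW, u, ⟨⟨w, hw, m, hwu⟩, huC⟩, hu0, hulast⟩ :=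
    hW _ (hza.2.1 ka) _ (hzb.2.1 kb)
  obtain ⟨t, ht, ht0⟩ := M.exists_mem_shortRunShift_zero_eq hstart hzb.1 hzb.2.1 kb
  set x : ℕ → M.A := fun i => w (m + i)
  have hxu : ∀ i (hi : i < n + 1), x i = u ⟨i, hi⟩ := fun i hi => (hwu ⟨i, hi⟩).symm
  have hxt : x n = t 0 := by rw [hxu n n.lt_succ_self, ht0, ← hulast]; rfl
  obtain ⟨j₀, hj₀, hj₀exp⟩ := ht.2.2 0
  refine ⟨splice x t n, M.splice_mem_shortRunShift (Nat.le_add_left E W) (fun i => hw (m + i))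
    (fun i hi => hxu i (by omega) ▸ huC _) ht hxt fun i hi => ⟨n - i + j₀, by omega, ?_⟩,
    0, n, ?_, ?_⟩
  · rwa [show i + (n - i + j₀) = n + j₀ by omega, splice_add, ← zero_add j₀]
  · rw [splice_zero hxt, hxu 0 n.succ_pos, ← hu0]; rfl
  · rw [zero_add, splice_self, ht0]

variable {M} in
lemma IrreducibleSet.exists_le_wordFromTo {C : Set M.A} (hC : M.IrreducibleSet C) :
    ∃ W, ∀ a ∈ C, ∀ b ∈ C, ∃ n ≤ W, M.WordFromTo C a b n := by
  have := M.finA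
  obtain ⟨W, hW⟩ := exists_forall_exists_le_of_finite
    (P := fun ab : M.A × M.A => fun n => ab.1 ∈ C → ab.2 ∈ C → M.WordFromTo C ab.1 ab.2 n)
    fun ab => by
      by_cases h : ab.1 ∈ C ∧ ab.2 ∈ C
      · exact (hC _ h.1 _ h.2).imp fun n hn _ _ => hn
      · exact ⟨0, fun h1 h2 => absurd ⟨h1, h2⟩ h⟩
  exact ⟨W, fun a ha b hb => (hW (a, b)).imp fun n hn => ⟨hn.1, hn.2 ha hb⟩⟩

end MarkovMultiMap

theorem stmt17_general (M : MarkovMultiMap)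
    (hlin : ∀ a ∈ M.A0, ∃ c d : ℝ, ∀ x ∈ M.D a, M.f a x = c * x + d)
    (hexist : ∃ a ∈ M.A0, (M.R0 a ∩ (M.P : Set ℝ)).Nonempty)
    (hirr : ∃ C0 : Set M.A, M.IrreducibleComponent C0 ∧ M.A0 ⊆ C0) :
    M.CC := by
  obtain ⟨C, ⟨hC, -⟩, hA0C⟩ := hirr
  obtain ⟨θ, hθ0, hθ1, hθ⟩ := M.exists_diam_D_le_mul_diam_R
  obtain ⟨E, hE⟩ := M.exists_uniform_reachesExpandingWithin hexist hC hA0C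
  obtain ⟨W, hW⟩ := hC.exists_le_wordFromTo
  refine ⟨M.shortRunShift C (W + E), M.isSubshift_shortRunShift C (W + E),
    M.transitiveOnSymbols_shortRunShift hW fun b hb => ?_, fun y hy => ?_,
    fun ε hε => M.intervalLen_Iword_lt hlin hθ0 hθ1 hθ C (W + E) hε⟩
  · obtain ⟨p, -, q, -, hpq, -, hD, -⟩ := M.exists_D_eq_Icc hb
    obtain ⟨s, hs, -, -, hs0, -⟩ :=
      M.exists_orbit_mem_shortRunShift hE hb (hD ▸ left_mem_Icc.mpr hpq.le)
    exact ⟨s, M.shortRunShift_mono hA0C le_rfl hs, hs0⟩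
  · obtain ⟨b, hb, hyb, -⟩ := M.exists_mem_D_of_mem_Icc M.P_zero M.P_one one_pos hy
    obtain ⟨s, hs, x, hx, -, hx0, hGr⟩ := M.exists_orbit_mem_shortRunShift hE hb hyb
    exact ⟨s, M.shortRunShift_mono hA0C (Nat.le_add_left E W) hs, x, hx, hx0, hGr⟩

/-- If every `G(a)`, `a ∈ A₀`, is a straight line segment, some `a ∈ A₀` has
`R₀(a) ∩ P ≠ ∅`, and some irreducible component contains `A₀`, then `Σ_M`
satisfies the Coding Condition (CC). -/
theorem stmt17 (M : MarkovMultiMap) (hpp : M.ProperlyParametrized)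
    (hlin : ∀ a ∈ M.A0, ∃ c d : ℝ, ∀ x ∈ M.D a, M.f a x = c * x + d)
    (hexist : ∃ a ∈ M.A0, (M.R0 a ∩ (M.P : Set ℝ)).Nonempty)
    (hirr : ∃ C0 : Set M.A, M.IrreducibleComponent C0 ∧ M.A0 ⊆ C0) :
    M.CC :=
  stmt17_general M hlin hexist hirr
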